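/- For any natural number n ≥ 1, the sum over σ in S_n of sign(σ)·fix(σ)·x^(fix(σ)-1) equals (x-1)^(n-2)·n·(x+n-2) for all real x (where terms with fix(σ) = 0 contribute 0). -/

import Mathlib

/-!
Expanding the determinant of the matrix with `x` on the diagonal and `1` elsewhere over
permutations gives `∑ σ, sign σ * x ^ fix σ`. That matrix is `(x - 1) • 1 + J` with `J` the
all-ones matrix, and `J = vecMulVec 1 1` has characteristic polynomial `t ^ n - n * t ^ (n - 1)`,
so the sum equals `(x - 1) ^ n + n * (x - 1) ^ (n - 1)`. Since this holds over every commutative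
ring, it holds for `x = X` in `R[X]`, and the theorem is its formal derivative.
-/

open Matrix Polynomial Finset

variable {α R : Type*} [Fintype α] [DecidableEq α] [CommRing R]

theorem det_of_ite_eq_one (x : R) :
    (of fun i j : α => if i = j then x else 1).det
      = (x - 1) ^ Fintype.card α + Fintype.card α * (x - 1) ^ (Fintype.card α - 1) := by
  have h : (of fun i j : α => if i = j then x else 1)
      = scalar α (x - 1) - vecMulVec (fun _ => -1) (fun _ => 1) := by
    ext i j
    by_cases hij : i = j <;> simp [hij, vecMulVec_apply]
  rw [h, ← eval_charpoly, charpoly_vecMulVec]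
  simp [dotProduct]

theorem sum_sign_mul_pow_card_fixed_eq_det (x : R) :
    ∑ σ : Equiv.Perm α, ((Equiv.Perm.sign σ : ℤ) : R) * x ^ #{i | σ i = i}
      = (of fun i j : α => if i = j then x else 1).det := by
  rw [det_apply']
  refine sum_congr rfl fun σ _ => ?_
  simp only [of_apply]
  rw [prod_ite, prod_const, prod_const, one_pow, mul_one]

theorem sum_sign_mul_pow_card_fixed (x : R) :
    ∑ σ : Equiv.Perm α, ((Equiv.Perm.sign σ : ℤ) : R) * x ^ #{i | σ i = i}
      = (x - 1) ^ Fintype.card α + Fintype.card α * (x - 1) ^ (Fintype.card α - 1) :=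
  (sum_sign_mul_pow_card_fixed_eq_det x).trans (det_of_ite_eq_one x)

theorem sum_sign_mul_card_fixed_mul_pow (x : R) :
    ∑ σ : Equiv.Perm α, ((Equiv.Perm.sign σ : ℤ) : R) * #{i | σ i = i} * x ^ (#{i | σ i = i} - 1)
      = Fintype.card α * (x - 1) ^ (Fintype.card α - 1)
        + Fintype.card α * (Fintype.card α - 1 : ℕ) * (x - 1) ^ (Fintype.card α - 1 - 1) := by
  have h := congrArg (fun p => (derivative p).eval x)
    (sum_sign_mul_pow_card_fixed (α := α) (X : R[X]))
  simp only [derivative_sum, derivative_intCast_mul, derivative_add,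
    derivative_pow, derivative_natCast_mul, derivative_sub, derivative_X, derivative_one,
    eval_finsetSum, eval_mul, eval_add, eval_pow, eval_sub, eval_X, eval_one, eval_intCast,
    eval_natCast, eval_zero, eval_C] at h
  simpa only [mul_assoc, sub_zero, mul_one] using h

theorem first_deriv (n : ℕ) (hn : 2 ≤ n) (x : ℝ) :
    (∑ σ : Equiv.Perm (Fin n),
      ((Equiv.Perm.sign σ : ℤ) : ℝ) *
        ((Finset.univ.filter fun i => σ i = i).card : ℝ) *
        x ^ ((Finset.univ.filter fun i => σ i = i).card - 1))
      = (x - 1) ^ (n - 2) * n * (x + n - 2) := by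
  obtain ⟨m, rfl⟩ := Nat.exists_eq_add_of_le' hn
  rw [sum_sign_mul_card_fixed_mul_pow, Fintype.card_fin]
  simp only [add_tsub_cancel_right]
  push_cast
  ring
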